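/- Let $v_\pm>0$, $\theta_\pm>0$ with $(v_+,\theta_+)\neq(v_-,\theta_-)$, and suppose the pressure matching condition $R\theta_- /v_- = R\theta_+/v_+$ holds. Then the three vectors $r_1^- = (-1, \lambda_1^-, \frac{\gamma-1}{R}p_-)^t$, $m_+ - m_- = (v_+-v_-, 0, \theta_+-\theta_-)^t$, and $r_3^+ = (-1, \lambda_3^+, \frac{\gamma-1}{R}p_+)^t$ are linearly independent in $\mathbb{R}^3$, where $\lambda_1^- = -\sqrt{\gamma p_- /v_-}$, $\lambda_3^+ = \sqrt{\gamma p_+/v_+}$, $p_\pm = R\theta_\pm/v_\pm$. Consequently every vector in $\mathbb{R}^3$ can be uniquely written as $\bar\theta_1 r_1^- + \bar\theta_2(m_+-m_-) + \bar\theta_3 r_3^+$ for real constants $\bar\theta_1,\bar\theta_2,\bar\theta_3$. -/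

import Mathlib

open Matrix Real

/-! The pressure matching condition makes the contact jump `m₊ - m₋` a multiple of
`(1, 0, p/R)`, with `p = p₋ = p₊`. Expanding the determinant with rows `r₁⁻`, `m₊ - m₋`, `r₃⁺`
then gives `(v₊ - v₋) (|λ₁⁻| + λ₃⁺) γ p / R`, and each factor is nonzero: `v₊ ≠ v₋` because
equal volumes and equal pressures would force equal temperatures. -/

theorem existsUnique_coords_of_linearIndependent {K V : Type*} [Field K] [AddCommGroup V]
    [Module K V] {v : Fin 3 → V} (hv : LinearIndependent K v) (hV : Module.finrank K V = 3)
    (w : V) : ∃! c : K × K × K, w = c.1 • v 0 + c.2.1 • v 1 + c.2.2 • v 2 := by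
  have hspan : Submodule.span K (Set.range v) = ⊤ :=
    hv.span_eq_top_of_card_eq_finrank (by simp [hV])
  obtain ⟨c, hc⟩ :=
    (Submodule.mem_span_range_iff_exists_fun K).mp (hspan ▸ Submodule.mem_top : w ∈ _)
  refine ⟨(c 0, c 1, c 2), by simp [← hc, Fin.sum_univ_three], ?_⟩
  rintro ⟨c₀, c₁, c₂⟩ hw
  have hcoeff := Fintype.linearIndependent_iff.mp hv (![c₀, c₁, c₂] - c)
    (by simp [sub_smul, Finset.sum_sub_distrib, hc, Fin.sum_univ_three, hw])
  simp only [Prod.mk.injEq]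
  exact ⟨by simpa [sub_eq_zero] using hcoeff 0, by simpa [sub_eq_zero] using hcoeff 1,
    by simpa [sub_eq_zero] using hcoeff 2⟩

theorem det_acoustic_contact_acoustic {K : Type*} [CommRing K] (a b k q s : K) :
    det (of ![![-1, -a, k], ![s, 0, s * q], ![-1, b, k]]) = s * (a + b) * (k + q) := by
  simp [det_fin_three]
  ring

theorem linearIndependent_acoustic_contact_acoustic {K : Type*} [Field K] {a b k q s : K}
    (hs : s ≠ 0) (hab : a + b ≠ 0) (hkq : k + q ≠ 0) :
    LinearIndependent K ![![-1, -a, k], ![s, 0, s * q], ![-1, b, k]] := by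
  have hunit : IsUnit (of ![![-1, -a, k], ![s, 0, s * q], ![-1, b, k]]) := by
    rw [isUnit_iff_isUnit_det, det_acoustic_contact_acoustic, isUnit_iff_ne_zero]
    exact mul_ne_zero (mul_ne_zero hs hab) hkq
  exact linearIndependent_rows_iff_isUnit.mpr hunit

theorem stmt2_general (R γ vm θm vp θp : ℝ) (hR : 0 < R) (hγ : 1 < γ)
    (hvm : 0 < vm) (hθm : 0 < θm) (hvp : 0 < vp)
    (hne : (vp, θp) ≠ (vm, θm))
    (hpress : R * θm / vm = R * θp / vp)
    (pm pp : ℝ) (hpm : pm = R * θm / vm) (hpp : pp = R * θp / vp)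
    (r1 r3 d : Fin 3 → ℝ)
    (hr1 : r1 = ![-1, -Real.sqrt (γ * pm / vm), (γ - 1) / R * pm])
    (hr3 : r3 = ![-1, Real.sqrt (γ * pp / vp), (γ - 1) / R * pp])
    (hd : d = ![vp - vm, 0, θp - θm]) :
    LinearIndependent ℝ ![r1, d, r3] ∧
    ∀ w : Fin 3 → ℝ, ∃! c : ℝ × ℝ × ℝ, w = c.1 • r1 + c.2.1 • d + c.2.2 • r3 := by
  have hpm_pos : 0 < pm := by rw [hpm]; positivity
  have hθm_eq : θm = vm * (pm / R) := by rw [hpm]; field_simp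
  have hθp_eq : θp = vp * (pm / R) := by rw [hpm, hpress]; field_simp
  have hv : vp - vm ≠ 0 := fun h ↦ hne <| by
    rw [sub_eq_zero.mp h, hθp_eq, hθm_eq, sub_eq_zero.mp h]
  have hd' : d = ![vp - vm, 0, (vp - vm) * (pm / R)] := by rw [hd, hθp_eq, hθm_eq, sub_mul]
  have hindep : LinearIndependent ℝ ![r1, d, r3] := by
    rw [hr1, hr3, hd', hpp, ← hpress, ← hpm]
    refine linearIndependent_acoustic_contact_acoustic hv ?_ ?_
    · have : 0 < Real.sqrt (γ * pm / vm) := Real.sqrt_pos.mpr (by positivity)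
      positivity
    · rw [show (γ - 1) / R * pm + pm / R = γ * pm / R by ring]
      positivity
  refine ⟨hindep, fun w ↦ ?_⟩
  simpa using existsUnique_coords_of_linearIndependent hindep (by simp) w

/-- Linear independence of `r₁⁻`, `m₊ - m₋`, `r₃⁺` and unique decomposition of
any vector of `ℝ³` along them. -/
theorem stmt2 (R γ vm θm vp θp : ℝ) (hR : 0 < R) (hγ : 1 < γ)
    (hvm : 0 < vm) (hθm : 0 < θm) (hvp : 0 < vp) (hθp : 0 < θp)
    (hne : (vp, θp) ≠ (vm, θm))
    (hpress : R * θm / vm = R * θp / vp)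
    (pm pp : ℝ) (hpm : pm = R * θm / vm) (hpp : pp = R * θp / vp)
    (r1 r3 d : Fin 3 → ℝ)
    (hr1 : r1 = ![-1, -Real.sqrt (γ * pm / vm), (γ - 1) / R * pm])
    (hr3 : r3 = ![-1, Real.sqrt (γ * pp / vp), (γ - 1) / R * pp])
    (hd : d = ![vp - vm, 0, θp - θm]) :
    LinearIndependent ℝ ![r1, d, r3] ∧
    ∀ w : Fin 3 → ℝ, ∃! c : ℝ × ℝ × ℝ, w = c.1 • r1 + c.2.1 • d + c.2.2 • r3 :=
  stmt2_general R γ vm θm vp θp hR hγ hvm hθm hvp hne hpress pm pp hpm hpp r1 r3 d hr1 hr3 hd
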